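/- arXiv:1606.01585 — 6 statements merged into one kernel-verified Lean document; each statement's English description precedes it below -/
import Mathlib

section
/- Let κ > 0, let c > 0 satisfy c·√κ < π/2, and let α ∈ ℝ. Define a(δ) = κ^{-1/2}·arccos( cos(c·√κ)·cos(δ·√κ) + sin(c·√κ)·sin(δ·√κ)·cos α ). Then as δ → 0 one has the second-order expansion a(δ)² = c² − 2·c·δ·cos α + (cos²α + (c·√κ / tan(c·√κ))·sin²α)·δ² + O(δ³); that is, the function δ ↦ a(δ)² − c² + 2·c·δ·cos α − (cos²α + (c·√κ / tan(c·√κ))·sin²α)·δ² is big-O of |δ|³ as δ → 0. -/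
open Real Topology Filter

noncomputable def sphH (A B C s : ℝ) : ℝ → ℝ :=
  fun δ => A * Real.cos (δ * s) + B * Real.sin (δ * s) * C

noncomputable def sphH1 (A B C s : ℝ) : ℝ → ℝ :=
  fun δ => A * (-Real.sin (δ * s) * s) + B * (Real.cos (δ * s) * s) * C

noncomputable def sphF (A B C s : ℝ) : ℝ → ℝ :=
  fun δ => (s⁻¹ * Real.arccos (sphH A B C s δ)) ^ 2

noncomputable def sphG (A B C s : ℝ) : ℝ → ℝ :=
  fun δ => 2 * (s⁻¹ * Real.arccos (sphH A B C s δ)) *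
    (s⁻¹ * (-(Real.sqrt (1 - sphH A B C s δ ^ 2))⁻¹ * sphH1 A B C s δ))

lemma sphH_hasDeriv (A B C s δ : ℝ) : HasDerivAt (sphH A B C s) (sphH1 A B C s δ) δ := by
  have hδ : HasDerivAt (fun x : ℝ => x * s) s δ := hasDerivAt_mul_const s
  exact ((hδ.cos.const_mul A).add ((hδ.sin.const_mul B).mul_const C))

lemma sphH1_hasDeriv (A B C s δ : ℝ) :
    HasDerivAt (sphH1 A B C s)
      (A * (-(Real.cos (δ * s) * s) * s) + B * (-Real.sin (δ * s) * s * s) * C) δ := by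
  have hδ : HasDerivAt (fun x : ℝ => x * s) s δ := hasDerivAt_mul_const s
  exact (((hδ.sin.neg.mul_const s).const_mul A).add
    (((hδ.cos.mul_const s).const_mul B).mul_const C))

lemma sphArccos_hasDeriv (A B C s δ : ℝ) (h1 : -1 < sphH A B C s δ) (h2 : sphH A B C s δ < 1) :
    HasDerivAt (fun x => s⁻¹ * Real.arccos (sphH A B C s x))
      (s⁻¹ * (-(Real.sqrt (1 - sphH A B C s δ ^ 2))⁻¹ * sphH1 A B C s δ)) δ := by
  have harc := (Real.hasDerivAt_arccos (ne_of_gt h1) (ne_of_lt h2)).comp δ (sphH_hasDeriv A B C s δ)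
  have : -(1 / Real.sqrt (1 - sphH A B C s δ ^ 2)) * sphH1 A B C s δ
      = -(Real.sqrt (1 - sphH A B C s δ ^ 2))⁻¹ * sphH1 A B C s δ := by rw [one_div]
  rw [this] at harc
  exact harc.const_mul s⁻¹

lemma sphF_hasDeriv (A B C s δ : ℝ) (h1 : -1 < sphH A B C s δ) (h2 : sphH A B C s δ < 1) :
    HasDerivAt (sphF A B C s) (sphG A B C s δ) δ := by
  have := (sphArccos_hasDeriv A B C s δ h1 h2).pow 2
  have e : (2:ℕ) * (s⁻¹ * Real.arccos (sphH A B C s δ)) ^ (2 - 1) *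
      (s⁻¹ * (-(Real.sqrt (1 - sphH A B C s δ ^ 2))⁻¹ * sphH1 A B C s δ)) = sphG A B C s δ := by
    simp [sphG]
  rw [e] at this
  exact this

lemma sphH_zero (A B C s : ℝ) : sphH A B C s 0 = A := by simp [sphH]

lemma sphH1_zero (A B C s : ℝ) : sphH1 A B C s 0 = B * s * C := by simp [sphH1]

lemma sqrt_one_sub_sq' (A B : ℝ) (hB0 : 0 < B) (hAB : A ^ 2 + B ^ 2 = 1) :
    Real.sqrt (1 - A ^ 2) = B := by
  have : 1 - A ^ 2 = B ^ 2 := by linarith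
  rw [this, Real.sqrt_sq hB0.le]

lemma sphG_hasDeriv_zero (A B C s : ℝ) (hs : s ≠ 0) (hB0 : 0 < B) (hAB : A ^ 2 + B ^ 2 = 1) :
    HasDerivAt (sphG A B C s)
      (2 * C ^ 2 + 2 * (s⁻¹ * Real.arccos A) * (s⁻¹ * (A * s ^ 2 * (1 - C ^ 2) / B))) 0 := by
  have hA1 : A < 1 := by nlinarith
  have hA1' : -1 < A := by nlinarith
  have h1 : -1 < sphH A B C s 0 := by rw [sphH_zero]; exact hA1'
  have h2 : sphH A B C s 0 < 1 := by rw [sphH_zero]; exact hA1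
  have hq0 : Real.sqrt (1 - sphH A B C s 0 ^ 2) = B := by
    rw [sphH_zero]; exact sqrt_one_sub_sq' A B hB0 hAB
  have hr0 : 1 - sphH A B C s 0 ^ 2 ≠ 0 := by
    rw [sphH_zero]; nlinarith
  -- u and its derivative
  have hu := sphArccos_hasDeriv A B C s 0 h1 h2
  -- sqrt part
  have hr : HasDerivAt (fun δ => 1 - sphH A B C s δ ^ 2)
      (-(2 * sphH A B C s 0 ^ 1 * sphH1 A B C s 0)) 0 :=
    ((sphH_hasDeriv A B C s 0).pow 2).const_sub 1
  have hq := (Real.hasDerivAt_sqrt hr0).comp 0 hr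
  have hqne : Real.sqrt (1 - sphH A B C s 0 ^ 2) ≠ 0 := by rw [hq0]; exact hB0.ne'
  have hw := hq.inv hqne
  have hv := ((hw.neg.mul (sphH1_hasDeriv A B C s 0)).const_mul s⁻¹)
  have hG := (hu.const_mul 2).mul hv
  refine HasDerivAt.congr_deriv (f := sphG A B C s) hG ?_
  simp only [Function.comp_apply, Pi.mul_apply, Pi.neg_apply, Pi.inv_apply, sphH_zero, sphH1_zero, sphH1, Real.cos_zero, Real.sin_zero,
    zero_mul, neg_zero, mul_zero, mul_one, one_mul, zero_add, add_zero, pow_one,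
    sqrt_one_sub_sq' A B hB0 hAB]
  have hBne : B ≠ 0 := hB0.ne'
  field_simp
  ring

lemma sph_main (s c α : ℝ) (hs : 0 < s) (hc : 0 < c) (ht : c * s < π / 2) :
    ∃ K > (0 : ℝ), ∃ ε > (0 : ℝ), ∀ δ : ℝ, |δ| < ε →
      |(s⁻¹ * Real.arccos (Real.cos (c * s) * Real.cos (δ * s) +
            Real.sin (c * s) * Real.sin (δ * s) * Real.cos α)) ^ 2
        - c ^ 2 + 2 * c * δ * Real.cos α
        - (Real.cos α ^ 2 + (c * s / Real.tan (c * s)) * Real.sin α ^ 2) * δ ^ 2|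
      ≤ K * |δ| ^ 3 := by
  have hπ : (0:ℝ) < π := Real.pi_pos
  have ht0 : 0 < c * s := mul_pos hc hs
  set A : ℝ := Real.cos (c * s) with hA_def
  set B : ℝ := Real.sin (c * s) with hB_def
  set C : ℝ := Real.cos α with hC_def
  have hA0 : 0 < A := Real.cos_pos_of_mem_Ioo ⟨by linarith, ht⟩
  have hB0 : 0 < B := Real.sin_pos_of_pos_of_lt_pi ht0 (by linarith)
  have hAB : A ^ 2 + B ^ 2 = 1 := by
    rw [hA_def, hB_def]; rw [add_comm]; exact Real.sin_sq_add_cos_sq (c * s)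
  have hA1 : A < 1 := by nlinarith
  have hA1' : -1 < A := by nlinarith
  have harct : Real.arccos A = c * s := Real.arccos_cos ht0.le (by linarith)
  have hsne : s ≠ 0 := hs.ne'
  have hBne : B ≠ 0 := hB0.ne'
  -- analyticity
  have hcont : ContDiff ℝ (⊤ : WithTop ℕ∞) (sphH A B C s) := by
    unfold sphH
    exact (contDiff_const.mul (Real.contDiff_cos.comp (contDiff_id.mul contDiff_const))).add
      ((contDiff_const.mul (Real.contDiff_sin.comp (contDiff_id.mul contDiff_const))).mul
        contDiff_const)
  have harc : ContDiffAt ℝ (⊤ : WithTop ℕ∞) Real.arccos (sphH A B C s 0) := by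
    rw [sphH_zero]; exact Real.contDiffAt_arccos hA1'.ne' hA1.ne
  have hFa : AnalyticAt ℝ (sphF A B C s) 0 := by
    have h1 : ContDiffAt ℝ (⊤ : WithTop ℕ∞) (fun δ => Real.arccos (sphH A B C s δ)) 0 :=
      harc.comp 0 hcont.contDiffAt
    have h2 : ContDiffAt ℝ (⊤ : WithTop ℕ∞) (sphF A B C s) 0 := by
      unfold sphF
      exact (contDiffAt_const.mul h1).pow 2
    exact h2.analyticAt
  obtain ⟨p, hp⟩ := hFa
  obtain ⟨r, hpr⟩ := hp
  have hpAt : HasFPowerSeriesAt (sphF A B C s) p 0 := ⟨r, hpr⟩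
  have hO := hpAt.isBigO_sub_partialSum_pow 3
  rw [Asymptotics.isBigO_iff] at hO
  obtain ⟨K0, hK0⟩ := hO
  rw [Metric.eventually_nhds_iff] at hK0
  obtain ⟨ε, hε, hKε⟩ := hK0
  -- coefficients
  have key : ∀ (n : ℕ) (y : ℝ), p n (fun _ : Fin n => y)
      = y ^ n * iteratedDeriv n (sphF A B C s) 0 / (n.factorial : ℝ) := by
    intro n y
    have h1 := hpr.factorial_smul y n
    rw [iteratedFDeriv_apply_eq_iteratedDeriv_mul_prod] at h1
    have h2 : (∏ _i : Fin n, y) = y ^ n := by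
      simp [Finset.prod_const]
    rw [h2, nsmul_eq_mul, smul_eq_mul] at h1
    have h3 : ((n.factorial : ℝ)) ≠ 0 := Nat.cast_ne_zero.2 n.factorial_ne_zero
    rw [eq_div_iff h3]
    linear_combination h1
  -- derivative values
  have hU : ∀ᶠ δ in 𝓝 (0:ℝ), -1 < sphH A B C s δ ∧ sphH A B C s δ < 1 := by
    have hc0 : ContinuousAt (sphH A B C s) 0 := (sphH_hasDeriv A B C s 0).continuousAt
    have hmem : Set.Ioo (-1 : ℝ) 1 ∈ 𝓝 (sphH A B C s 0) := by
      rw [sphH_zero]; exact Ioo_mem_nhds hA1' hA1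
    filter_upwards [hc0.preimage_mem_nhds hmem] with δ hδ
    exact ⟨hδ.1, hδ.2⟩
  have h10 : -1 < sphH A B C s 0 := by rw [sphH_zero]; exact hA1'
  have h20 : sphH A B C s 0 < 1 := by rw [sphH_zero]; exact hA1
  have d0 : sphF A B C s 0 = c ^ 2 := by
    unfold sphF
    rw [sphH_zero, harct]
    rw [show s⁻¹ * (c * s) = c by field_simp]
  have d1 : deriv (sphF A B C s) 0 = -(2 * c * C) := by
    rw [(sphF_hasDeriv A B C s 0 h10 h20).deriv]
    unfold sphG
    rw [sphH_zero, sphH1_zero, harct, sqrt_one_sub_sq' A B hB0 hAB]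
    field_simp
  have d2 : deriv (deriv (sphF A B C s)) 0
      = 2 * C ^ 2 + 2 * (c * s * A * (1 - C ^ 2) / B) := by
    have hEq : deriv (sphF A B C s) =ᶠ[𝓝 (0:ℝ)] sphG A B C s := by
      filter_upwards [hU] with δ hδ
      exact (sphF_hasDeriv A B C s δ hδ.1 hδ.2).deriv
    rw [hEq.deriv_eq, (sphG_hasDeriv_zero A B C s hsne hB0 hAB).deriv, harct]
    field_simp
  have hps : ∀ y : ℝ, p.partialSum 3 y
      = c ^ 2 + y * (-(2 * c * C)) + y ^ 2 * (2 * C ^ 2 + 2 * (c * s * A * (1 - C ^ 2) / B)) / 2 := by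
    intro y
    have e2 : iteratedDeriv 2 (sphF A B C s) 0 = deriv (deriv (sphF A B C s)) 0 := by
      rw [iteratedDeriv_succ, iteratedDeriv_one]
    simp only [FormalMultilinearSeries.partialSum, Finset.sum_range_succ, Finset.range_zero,
      Finset.sum_empty, key, iteratedDeriv_zero, iteratedDeriv_one, e2, d0, d1, d2]
    norm_num [Nat.factorial]
  -- conclusion
  refine ⟨|K0| + 1, by positivity, ε, hε, fun δ hδ => ?_⟩
  have hdist : dist δ (0:ℝ) < ε := by rwa [Real.dist_eq, sub_zero]
  have hb := hKε hdist
  have hsin : Real.sin α ^ 2 = 1 - C ^ 2 := by rw [hC_def, Real.sin_sq]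
  have htan : Real.tan (c * s) = B / A := Real.tan_eq_sin_div_cos (c * s)
  have hAne : A ≠ 0 := hA0.ne'
  have hval : (s⁻¹ * Real.arccos (A * Real.cos (δ * s) + B * Real.sin (δ * s) * C)) ^ 2
        - c ^ 2 + 2 * c * δ * C
        - (C ^ 2 + (c * s / Real.tan (c * s)) * Real.sin α ^ 2) * δ ^ 2
      = sphF A B C s (0 + δ) - p.partialSum 3 δ := by
    rw [zero_add, hps δ, hsin, htan]
    have : sphF A B C s δ
        = (s⁻¹ * Real.arccos (A * Real.cos (δ * s) + B * Real.sin (δ * s) * C)) ^ 2 := rfl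
    rw [this]
    field_simp
    ring
  rw [hval]
  calc ‖sphF A B C s (0 + δ) - p.partialSum 3 δ‖ ≤ K0 * ‖‖δ‖ ^ 3‖ := hb
    _ ≤ (|K0| + 1) * |δ| ^ 3 := by
        rw [Real.norm_eq_abs, Real.norm_eq_abs, abs_of_nonneg (by positivity : (0:ℝ) ≤ |δ| ^ 3)]
        have : (0:ℝ) ≤ |δ| ^ 3 := by positivity
        nlinarith [le_abs_self K0, abs_nonneg K0]

/-- Second-order expansion of the spherical law of cosines: if `κ > 0`,
`0 < c` with `c·√κ < π/2`, and `a(δ)` is the side opposite the angle `α`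
in a geodesic triangle with adjacent sides `c` and `δ` in the space of
constant curvature `κ`, then
`a(δ)² = c² − 2cδ·cos α + (cos²α + (c√κ/tan(c√κ))·sin²α)·δ² + O(δ³)` as `δ → 0`. -/
theorem spherical_cosine_rule_expansion (κ c α : ℝ) (hκ : 0 < κ) (hc : 0 < c)
    (hcκ : c * Real.sqrt κ < π / 2) :
    ∃ K > (0 : ℝ), ∃ ε > (0 : ℝ), ∀ δ : ℝ, |δ| < ε →
      |((Real.sqrt κ)⁻¹ *
          Real.arccos (Real.cos (c * Real.sqrt κ) * Real.cos (δ * Real.sqrt κ) +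
            Real.sin (c * Real.sqrt κ) * Real.sin (δ * Real.sqrt κ) * Real.cos α)) ^ 2
        - c ^ 2 + 2 * c * δ * Real.cos α
        - (Real.cos α ^ 2 +
            (c * Real.sqrt κ / Real.tan (c * Real.sqrt κ)) * Real.sin α ^ 2) * δ ^ 2|
      ≤ K * |δ| ^ 3 := by
  exact sph_main (Real.sqrt κ) c α (Real.sqrt_pos.2 hκ) hc hcκ
end

section
/- Let s > 0, let c > 0, and let α ∈ ℝ. For δ ∈ ℝ the quantity cosh(c·s)·cosh(δ·s) − sinh(c·s)·sinh(δ·s)·cos α is at least 1, so a(δ) = s^{-1}·arcosh( cosh(c·s)·cosh(δ·s) − sinh(c·s)·sinh(δ·s)·cos α ) is well defined. Then as δ → 0 one has the second-order expansion a(δ)² = c² − 2·c·δ·cos α + (cos²α + (c·s / tanh(c·s))·sin²α)·δ² + O(δ³); that is, the function δ ↦ a(δ)² − c² + 2·c·δ·cos α − (cos²α + (c·s / tanh(c·s))·sin²α)·δ² is big-O of |δ|³ as δ → 0. -/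
open Real

/-- The inverse hyperbolic cosine on `[1, ∞)`: `arcosh x = log (x + √(x² − 1))`. -/
noncomputable def arcosh (x : ℝ) : ℝ := Real.log (x + Real.sqrt (x ^ 2 - 1))

namespace HypAux

lemma arcosh_cosh {t : ℝ} (ht : 0 ≤ t) : _root_.arcosh (Real.cosh t) = t := by
  have h1 : Real.cosh t ^ 2 - 1 = Real.sinh t ^ 2 := by rw [Real.cosh_sq]; ring
  rw [_root_.arcosh, h1, Real.sqrt_sq (Real.sinh_nonneg_iff.2 ht), Real.cosh_add_sinh, Real.log_exp]

lemma hasDerivAt_arcosh {x : ℝ} (hx : 1 < x) : HasDerivAt _root_.arcosh (1 / Real.sqrt (x ^ 2 - 1)) x := by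
  have hpos : 0 < x ^ 2 - 1 := by nlinarith
  have hw : 0 < Real.sqrt (x ^ 2 - 1) := Real.sqrt_pos.2 hpos
  have hinner : HasDerivAt (fun y : ℝ => y ^ 2 - 1) (2 * x) x := by
    simpa using ((hasDerivAt_id x).pow 2).sub_const 1
  have hsqrt : HasDerivAt (fun y : ℝ => Real.sqrt (y ^ 2 - 1))
      (1 / (2 * Real.sqrt (x ^ 2 - 1)) * (2 * x)) x :=
    (Real.hasDerivAt_sqrt hpos.ne').comp x hinner
  have hsum : HasDerivAt (fun y : ℝ => y + Real.sqrt (y ^ 2 - 1))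
      (1 + 1 / (2 * Real.sqrt (x ^ 2 - 1)) * (2 * x)) x := (hasDerivAt_id x).add hsqrt
  have hgt : 0 < x + Real.sqrt (x ^ 2 - 1) := by positivity
  have := hsum.log hgt.ne'
  have heq : (1 + 1 / (2 * Real.sqrt (x ^ 2 - 1)) * (2 * x)) / (x + Real.sqrt (x ^ 2 - 1))
      = 1 / Real.sqrt (x ^ 2 - 1) := by
    have h2 : Real.sqrt (x ^ 2 - 1) ^ 2 = x ^ 2 - 1 := Real.sq_sqrt hpos.le
    field_simp
    nlinarith [h2]
  rw [heq] at this
  exact this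

noncomputable def F (s c α δ : ℝ) : ℝ :=
  Real.cosh (c * s) * Real.cosh (δ * s) - Real.sinh (c * s) * Real.sinh (δ * s) * Real.cos α

noncomputable def F1 (s c α δ : ℝ) : ℝ :=
  s * (Real.cosh (c * s) * Real.sinh (δ * s) - Real.sinh (c * s) * Real.cosh (δ * s) * Real.cos α)

noncomputable def W (s c α δ : ℝ) : ℝ := Real.sqrt ((F s c α δ) ^ 2 - 1)

variable {s c α : ℝ}

lemma cosh_le_F (hs : 0 < s) (hc : 0 < c) (δ : ℝ) : Real.cosh ((c - |δ|) * s) ≤ F s c α δ := by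
  have h1 : Real.sinh (c * s) * Real.sinh (δ * s) * Real.cos α
      ≤ Real.sinh (c * s) * Real.sinh (|δ| * s) := by
    have hS : 0 < Real.sinh (c * s) := Real.sinh_pos_iff.2 (by positivity)
    have : Real.sinh (δ * s) * Real.cos α ≤ |Real.sinh (δ * s)| := by
      calc Real.sinh (δ * s) * Real.cos α ≤ |Real.sinh (δ * s) * Real.cos α| := le_abs_self _
        _ = |Real.sinh (δ * s)| * |Real.cos α| := abs_mul _ _
        _ ≤ |Real.sinh (δ * s)| * 1 := by
            exact mul_le_mul_of_nonneg_left (Real.abs_cos_le_one α) (abs_nonneg _)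
        _ = |Real.sinh (δ * s)| := mul_one _
    have habs : |Real.sinh (δ * s)| = Real.sinh (|δ| * s) := by
      rw [Real.abs_sinh, abs_mul, abs_of_pos hs]
    calc Real.sinh (c * s) * Real.sinh (δ * s) * Real.cos α
        = Real.sinh (c * s) * (Real.sinh (δ * s) * Real.cos α) := by ring
      _ ≤ Real.sinh (c * s) * Real.sinh (|δ| * s) := by
          rw [← habs]; exact mul_le_mul_of_nonneg_left this hS.le
  have h2 : Real.cosh (δ * s) = Real.cosh (|δ| * s) := by
    rw [← Real.cosh_abs, abs_mul, abs_of_pos hs]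
  have := Real.cosh_sub (c * s) (|δ| * s)
  rw [F, h2]
  have : Real.cosh ((c - |δ|) * s) = Real.cosh (c * s) * Real.cosh (|δ| * s)
      - Real.sinh (c * s) * Real.sinh (|δ| * s) := by
    rw [sub_mul]; exact Real.cosh_sub (c * s) (|δ| * s)
  linarith

lemma one_le_F (hs : 0 < s) (hc : 0 < c) (δ : ℝ) : 1 ≤ F s c α δ :=
  le_trans (Real.one_le_cosh _) (cosh_le_F hs hc δ)

lemma one_lt_F (hs : 0 < s) (hc : 0 < c) {δ : ℝ} (hδ : |δ| < c) : 1 < F s c α δ := by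
  refine lt_of_lt_of_le ?_ (cosh_le_F hs hc δ)
  have h : 0 < (c - |δ|) * s := mul_pos (by linarith) hs
  exact Real.one_lt_cosh.2 h.ne'


lemma hasDerivAt_F (δ : ℝ) : HasDerivAt (F s c α) (F1 s c α δ) δ := by
  have hcosh : HasDerivAt (fun x : ℝ => Real.cosh (x * s)) (Real.sinh (δ * s) * s) δ :=
    ((Real.hasDerivAt_cosh (δ * s)).comp δ (hasDerivAt_mul_const s) :)
  have hsinh : HasDerivAt (fun x : ℝ => Real.sinh (x * s)) (Real.cosh (δ * s) * s) δ :=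
    ((Real.hasDerivAt_sinh (δ * s)).comp δ (hasDerivAt_mul_const s) :)
  have := (hcosh.const_mul (Real.cosh (c * s))).sub
    ((hsinh.const_mul (Real.sinh (c * s))).mul_const (Real.cos α))
  refine this.congr_deriv ?_
  rw [F1]; ring

lemma hasDerivAt_F1 (δ : ℝ) : HasDerivAt (F1 s c α) (s ^ 2 * F s c α δ) δ := by
  have hcosh : HasDerivAt (fun x : ℝ => Real.cosh (x * s)) (Real.sinh (δ * s) * s) δ :=
    ((Real.hasDerivAt_cosh (δ * s)).comp δ (hasDerivAt_mul_const s) :)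
  have hsinh : HasDerivAt (fun x : ℝ => Real.sinh (x * s)) (Real.cosh (δ * s) * s) δ :=
    ((Real.hasDerivAt_sinh (δ * s)).comp δ (hasDerivAt_mul_const s) :)
  have := ((hsinh.const_mul (Real.cosh (c * s))).sub
    ((hcosh.const_mul (Real.sinh (c * s))).mul_const (Real.cos α))).const_mul s
  refine this.congr_deriv ?_
  rw [F]; ring

lemma W_pos (hs : 0 < s) (hc : 0 < c) {δ : ℝ} (hδ : |δ| < c) : 0 < W s c α δ := by
  have h := one_lt_F (α := α) hs hc hδ
  exact Real.sqrt_pos.2 (by nlinarith)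

lemma W_sq (hs : 0 < s) (hc : 0 < c) {δ : ℝ} (hδ : |δ| < c) :
    W s c α δ ^ 2 = F s c α δ ^ 2 - 1 := by
  have h := one_lt_F (α := α) hs hc hδ
  exact Real.sq_sqrt (by nlinarith)

lemma hasDerivAt_W (hs : 0 < s) (hc : 0 < c) {δ : ℝ} (hδ : |δ| < c) :
    HasDerivAt (W s c α) (F s c α δ * F1 s c α δ / W s c α δ) δ := by
  have h := one_lt_F (α := α) hs hc hδ
  have hpos : (0:ℝ) < F s c α δ ^ 2 - 1 := by nlinarith
  have hinner : HasDerivAt (fun x => F s c α x ^ 2 - 1) (2 * F s c α δ * F1 s c α δ) δ := by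
    have := ((hasDerivAt_F (s := s) (c := c) (α := α) δ).fun_pow 2).sub_const 1
    refine this.congr_deriv ?_; try ring
  have := (Real.hasDerivAt_sqrt hpos.ne').comp δ hinner
  refine this.congr_deriv ?_
  rw [W]
  field_simp [(Real.sqrt_pos.2 hpos).ne']

noncomputable def A (s c α δ : ℝ) : ℝ := _root_.arcosh (F s c α δ)
noncomputable def A1 (s c α δ : ℝ) : ℝ := F1 s c α δ / W s c α δ
noncomputable def A2 (s c α δ : ℝ) : ℝ :=
  s ^ 2 * F s c α δ / W s c α δ - F s c α δ * F1 s c α δ ^ 2 / W s c α δ ^ 3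
noncomputable def A3 (s c α δ : ℝ) : ℝ :=
  s ^ 2 * F1 s c α δ / W s c α δ - 3 * s ^ 2 * F s c α δ ^ 2 * F1 s c α δ / W s c α δ ^ 3
    - F1 s c α δ ^ 3 / W s c α δ ^ 3 + 3 * F s c α δ ^ 2 * F1 s c α δ ^ 3 / W s c α δ ^ 5

lemma hasDerivAt_A (hs : 0 < s) (hc : 0 < c) {δ : ℝ} (hδ : |δ| < c) :
    HasDerivAt (A s c α) (A1 s c α δ) δ := by
  have h := one_lt_F (α := α) hs hc hδ
  have := (hasDerivAt_arcosh h).comp δ (hasDerivAt_F (s := s) (c := c) (α := α) δ)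
  refine this.congr_deriv ?_
  rw [A1, W]; ring

lemma hasDerivAt_A1 (hs : 0 < s) (hc : 0 < c) {δ : ℝ} (hδ : |δ| < c) :
    HasDerivAt (A1 s c α) (A2 s c α δ) δ := by
  have hw := W_pos (α := α) hs hc hδ
  have := (hasDerivAt_F1 (s := s) (c := c) (α := α) δ).div (hasDerivAt_W hs hc hδ) hw.ne'
  refine this.congr_deriv ?_
  rw [A2]
  field_simp
  try ring

lemma hasDerivAt_A2 (hs : 0 < s) (hc : 0 < c) {δ : ℝ} (hδ : |δ| < c) :
    HasDerivAt (A2 s c α) (A3 s c α δ) δ := by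
  have hw := W_pos (α := α) hs hc hδ
  have hF := hasDerivAt_F (s := s) (c := c) (α := α) δ
  have hF1 := hasDerivAt_F1 (s := s) (c := c) (α := α) δ
  have hW := hasDerivAt_W (s := s) (c := c) (α := α) hs hc hδ
  have ht1 : HasDerivAt (fun x => s ^ 2 * F s c α x / W s c α x)
      ((s ^ 2 * F1 s c α δ * W s c α δ - s ^ 2 * F s c α δ * (F s c α δ * F1 s c α δ / W s c α δ)) / W s c α δ ^ 2) δ :=
    (hF.const_mul (s ^ 2)).div hW hw.ne'
  have hW3 : HasDerivAt (fun x => W s c α x ^ 3) (3 * W s c α δ ^ 2 * (F s c α δ * F1 s c α δ / W s c α δ)) δ := by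
    have := hW.fun_pow 3
    refine this.congr_deriv ?_; try ring
  have ht2 : HasDerivAt (fun x => F s c α x * F1 s c α x ^ 2 / W s c α x ^ 3)
      (((F1 s c α δ * F1 s c α δ ^ 2 + F s c α δ * (2 * F1 s c α δ * (s ^ 2 * F s c α δ))) * W s c α δ ^ 3
        - F s c α δ * F1 s c α δ ^ 2 * (3 * W s c α δ ^ 2 * (F s c α δ * F1 s c α δ / W s c α δ))) / (W s c α δ ^ 3) ^ 2) δ := by
    have hnum : HasDerivAt (fun x => F s c α x * F1 s c α x ^ 2)
        (F1 s c α δ * F1 s c α δ ^ 2 + F s c α δ * (2 * F1 s c α δ * (s ^ 2 * F s c α δ))) δ := by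
      have := hF.fun_mul (hF1.fun_pow 2)
      refine this.congr_deriv ?_; try ring
    exact hnum.div hW3 (by positivity)
  have := ht1.sub ht2
  refine this.congr_deriv ?_
  rw [A3]
  field_simp
  ring

lemma F_zero : F s c α 0 = Real.cosh (c * s) := by simp [F]

lemma F1_zero : F1 s c α 0 = -(s * Real.sinh (c * s) * Real.cos α) := by
  simp [F1]; ring

lemma W_zero (hs : 0 < s) (hc : 0 < c) : W s c α 0 = Real.sinh (c * s) := by
  have h1 : Real.cosh (c * s) ^ 2 - 1 = Real.sinh (c * s) ^ 2 := by
    rw [Real.cosh_sq]; ring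
  rw [W, F_zero, h1, Real.sqrt_sq (Real.sinh_nonneg_iff.2 (by positivity))]

lemma A_zero (hs : 0 < s) (hc : 0 < c) : A s c α 0 = c * s := by
  rw [A, F_zero]; exact arcosh_cosh (by positivity)

noncomputable def B (s c α : ℝ) : ℝ :=
  Real.cos α ^ 2 + (c * s / Real.tanh (c * s)) * Real.sin α ^ 2

noncomputable def h (s c α δ : ℝ) : ℝ :=
  (s⁻¹ * A s c α δ) ^ 2 - c ^ 2 + 2 * c * δ * Real.cos α - B s c α * δ ^ 2

noncomputable def h1 (s c α δ : ℝ) : ℝ :=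
  2 * s⁻¹ ^ 2 * A s c α δ * A1 s c α δ + 2 * c * Real.cos α - 2 * B s c α * δ

noncomputable def h2 (s c α δ : ℝ) : ℝ :=
  2 * s⁻¹ ^ 2 * (A1 s c α δ ^ 2 + A s c α δ * A2 s c α δ) - 2 * B s c α

noncomputable def h3 (s c α δ : ℝ) : ℝ :=
  2 * s⁻¹ ^ 2 * (3 * A1 s c α δ * A2 s c α δ + A s c α δ * A3 s c α δ)

lemma hasDerivAt_h (hs : 0 < s) (hc : 0 < c) {δ : ℝ} (hδ : |δ| < c) :
    HasDerivAt (h s c α) (h1 s c α δ) δ := by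
  have hA := hasDerivAt_A (α := α) hs hc hδ
  have hterm : HasDerivAt (fun x => (s⁻¹ * A s c α x) ^ 2)
      (2 * (s⁻¹ * A s c α δ) * (s⁻¹ * A1 s c α δ)) δ := by
    have := ((hA.const_mul s⁻¹).fun_pow 2)
    refine this.congr_deriv ?_; try ring
  have := ((hterm.sub_const (c ^ 2)).add
      ((hasDerivAt_id δ).const_mul (2 * c * Real.cos α))).sub
      (((hasDerivAt_id δ).pow 2).const_mul (B s c α))
  have heq : HasDerivAt (h s c α)
      (2 * (s⁻¹ * A s c α δ) * (s⁻¹ * A1 s c α δ) + 2 * c * Real.cos α * 1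
        - B s c α * (2 * id δ ^ (2 - 1) * 1)) δ := by
    refine this.congr_of_eventuallyEq ?_
    filter_upwards with x
    rw [h]; simp only [id_eq, Pi.add_apply, Pi.sub_apply, Pi.pow_apply]; ring
  refine heq.congr_deriv ?_
  rw [h1]; simp; ring

lemma hasDerivAt_h1 (hs : 0 < s) (hc : 0 < c) {δ : ℝ} (hδ : |δ| < c) :
    HasDerivAt (h1 s c α) (h2 s c α δ) δ := by
  have hA := hasDerivAt_A (α := α) hs hc hδ
  have hA1 := hasDerivAt_A1 (α := α) hs hc hδ
  have := (((hA.fun_mul hA1).const_mul (2 * s⁻¹ ^ 2)).add_const (2 * c * Real.cos α)).sub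
      ((hasDerivAt_id δ).const_mul (2 * B s c α))
  have heq : HasDerivAt (h1 s c α)
      (2 * s⁻¹ ^ 2 * (A1 s c α δ * A1 s c α δ + A s c α δ * A2 s c α δ) - 2 * B s c α * 1) δ := by
    refine this.congr_of_eventuallyEq ?_
    filter_upwards with x
    rw [h1]; simp only [id_eq, Pi.sub_apply]; ring
  refine heq.congr_deriv ?_
  rw [h2]; ring

lemma hasDerivAt_h2 (hs : 0 < s) (hc : 0 < c) {δ : ℝ} (hδ : |δ| < c) :
    HasDerivAt (h2 s c α) (h3 s c α δ) δ := by
  have hA := hasDerivAt_A (α := α) hs hc hδ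
  have hA1 := hasDerivAt_A1 (α := α) hs hc hδ
  have hA2 := hasDerivAt_A2 (α := α) hs hc hδ
  have hsq : HasDerivAt (fun x => A1 s c α x ^ 2) (2 * A1 s c α δ * A2 s c α δ) δ := by
    have := hA1.fun_pow 2
    refine this.congr_deriv ?_; try ring
  have := ((hsq.add (hA.fun_mul hA2)).const_mul (2 * s⁻¹ ^ 2)).sub_const (2 * B s c α)
  have heq : HasDerivAt (h2 s c α)
      (2 * s⁻¹ ^ 2 * (2 * A1 s c α δ * A2 s c α δ + (A1 s c α δ * A2 s c α δ + A s c α δ * A3 s c α δ))) δ := by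
    refine this.congr_of_eventuallyEq ?_
    filter_upwards with x
    rw [h2]; rfl
  refine heq.congr_deriv ?_
  rw [h3]; ring

lemma h_zero (hs : 0 < s) (hc : 0 < c) : h s c α 0 = 0 := by
  rw [h, A_zero hs hc, B]
  field_simp
  simp

lemma h1_zero (hs : 0 < s) (hc : 0 < c) : h1 s c α 0 = 0 := by
  have hS : 0 < Real.sinh (c * s) := Real.sinh_pos_iff.2 (by positivity)
  rw [h1, A_zero hs hc, A1, F1_zero, W_zero hs hc]
  field_simp
  ring

lemma h2_zero (hs : 0 < s) (hc : 0 < c) : h2 s c α 0 = 0 := by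
  have hS : 0 < Real.sinh (c * s) := Real.sinh_pos_iff.2 (by positivity)
  have hC : 0 < Real.cosh (c * s) := Real.cosh_pos _
  have hsin : Real.sin α ^ 2 = 1 - Real.cos α ^ 2 := by
    nlinarith [Real.sin_sq_add_cos_sq α]
  rw [h2, A_zero hs hc, A1, A2, F_zero, F1_zero, W_zero hs hc, B,
    Real.tanh_eq_sinh_div_cosh, hsin]
  field_simp
  ring

lemma continuousAt_h3 (hs : 0 < s) (hc : 0 < c) {δ : ℝ} (hδ : |δ| < c) :
    ContinuousAt (h3 s c α) δ := by
  have hF := (hasDerivAt_F (s := s) (c := c) (α := α) δ).continuousAt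
  have hF1 := (hasDerivAt_F1 (s := s) (c := c) (α := α) δ).continuousAt
  have hW := (hasDerivAt_W (α := α) hs hc hδ).continuousAt
  have hw : W s c α δ ≠ 0 := (W_pos (α := α) hs hc hδ).ne'
  have hA := (hasDerivAt_A (α := α) hs hc hδ).continuousAt
  have hA1 := (hasDerivAt_A1 (α := α) hs hc hδ).continuousAt
  have hA2 := (hasDerivAt_A2 (α := α) hs hc hδ).continuousAt
  have h3ne : W s c α δ ^ 3 ≠ 0 := pow_ne_zero _ hw
  have h5ne : W s c α δ ^ 5 ≠ 0 := pow_ne_zero _ hw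
  have hA3 : ContinuousAt (A3 s c α) δ := by
    unfold A3
    exact ((((continuousAt_const.mul hF1).div hW hw).sub
      (((continuousAt_const.mul (hF.pow 2)).mul hF1).div (hW.pow 3) h3ne)).sub
      ((hF1.pow 3).div (hW.pow 3) h3ne)).add
      (((continuousAt_const.mul (hF.pow 2)).mul (hF1.pow 3)).div (hW.pow 5) h5ne)
  unfold h3
  exact continuousAt_const.mul
    (((continuousAt_const.mul hA1).mul hA2).add (hA.mul hA3))

end HypAux

open HypAux in
/-- Second-order expansion of the hyperbolic law of cosines: if `s > 0`, `c > 0`,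
then `cosh(cs)·cosh(δs) − sinh(cs)·sinh(δs)·cos α ≥ 1`, so
`a(δ) = s⁻¹·arcosh(cosh(cs)·cosh(δs) − sinh(cs)·sinh(δs)·cos α)` is well defined, and
`a(δ)² = c² − 2cδ·cos α + (cos²α + (cs/tanh(cs))·sin²α)·δ² + O(δ³)` as `δ → 0`. -/
theorem hyperbolic_cosine_rule_expansion (s c α : ℝ) (hs : 0 < s) (hc : 0 < c) :
    (∀ δ : ℝ, 1 ≤ Real.cosh (c * s) * Real.cosh (δ * s)
        - Real.sinh (c * s) * Real.sinh (δ * s) * Real.cos α) ∧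
    ∃ K > (0 : ℝ), ∃ ε > (0 : ℝ), ∀ δ : ℝ, |δ| < ε →
      |(s⁻¹ * _root_.arcosh (Real.cosh (c * s) * Real.cosh (δ * s)
            - Real.sinh (c * s) * Real.sinh (δ * s) * Real.cos α)) ^ 2
        - c ^ 2 + 2 * c * δ * Real.cos α
        - (Real.cos α ^ 2 + (c * s / Real.tanh (c * s)) * Real.sin α ^ 2) * δ ^ 2|
      ≤ K * |δ| ^ 3 := by
  constructor
  · exact fun δ => one_le_F hs hc δ
  · -- the compact interval
    set E : Set ℝ := Set.Icc (-(c / 2)) (c / 2) with hE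
    have hmem : ∀ x ∈ E, |x| < c := by
      intro x hx
      rw [hE, Set.mem_Icc] at hx
      rw [abs_lt]; constructor <;> linarith [hx.1, hx.2]
    have hcont : ContinuousOn (h3 s c α) E :=
      fun x hx => (continuousAt_h3 hs hc (hmem x hx)).continuousWithinAt
    obtain ⟨M, hM⟩ := isCompact_Icc.exists_bound_of_continuousOn hcont
    set K := max M 1 with hK
    have hKpos : (0:ℝ) < K := lt_of_lt_of_le one_pos (le_max_right _ _)
    refine ⟨K, hKpos, c / 2, half_pos hc, ?_⟩
    intro δ hδ
    have hδc : |δ| < c := lt_trans hδ (by linarith)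
    have h0E : (0:ℝ) ∈ E := by
      rw [hE, Set.mem_Icc]; constructor <;> [linarith [half_pos hc]; linarith [half_pos hc]]
    -- Step 1 : |h2 t| ≤ K * |t| on E
    have step2 : ∀ t ∈ E, |h2 s c α t| ≤ K * |t| := by
      intro t ht
      have := Convex.norm_image_sub_le_of_norm_hasDerivWithin_le
        (f := h2 s c α) (f' := h3 s c α) (C := K)
        (fun x hx => (hasDerivAt_h2 hs hc (hmem x hx)).hasDerivWithinAt)
        (fun x hx => le_trans (hM x hx) (le_max_left _ _))
        (convex_Icc _ _) h0E ht
      rw [h2_zero hs hc] at this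
      simpa using this
    -- the small interval around 0 of radius |δ|
    set D : Set ℝ := Set.Icc (-|δ|) |δ| with hD
    have hDE : D ⊆ E := by
      rw [hD, hE]
      exact Set.Icc_subset_Icc (by linarith [le_of_lt hδ]) (le_of_lt hδ)
    have h0D : (0:ℝ) ∈ D := by
      rw [hD, Set.mem_Icc]; constructor <;> [linarith [abs_nonneg δ]; exact abs_nonneg δ]
    have hδD : δ ∈ D := by
      rw [hD, Set.mem_Icc]; exact ⟨neg_abs_le δ, le_abs_self δ⟩
    have hmemD : ∀ x ∈ D, |x| ≤ |δ| := by
      intro x hx; rw [hD, Set.mem_Icc] at hx; rw [abs_le]; exact hx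
    -- Step 2 : |h1 t| ≤ K * |δ|^2 on D
    have step1 : ∀ t ∈ D, |h1 s c α t| ≤ K * |δ| ^ 2 := by
      intro t ht
      have := Convex.norm_image_sub_le_of_norm_hasDerivWithin_le
        (f := h1 s c α) (f' := h2 s c α) (C := K * |δ|)
        (fun x hx => (hasDerivAt_h1 hs hc (hmem x (hDE hx))).hasDerivWithinAt)
        (fun x hx => by
          calc ‖h2 s c α x‖ = |h2 s c α x| := rfl
            _ ≤ K * |x| := step2 x (hDE hx)
            _ ≤ K * |δ| := mul_le_mul_of_nonneg_left (hmemD x hx) hKpos.le)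
        (convex_Icc _ _) h0D ht
      rw [h1_zero hs hc] at this
      simp only [sub_zero, Real.norm_eq_abs] at this
      calc |h1 s c α t| ≤ K * |δ| * |t| := this
        _ ≤ K * |δ| * |δ| := by
            exact mul_le_mul_of_nonneg_left (hmemD t ht) (by positivity)
        _ = K * |δ| ^ 2 := by ring
    -- Step 3 : |h δ| ≤ K * |δ|^3
    have step0 : |h s c α δ| ≤ K * |δ| ^ 3 := by
      have := Convex.norm_image_sub_le_of_norm_hasDerivWithin_le
        (f := h s c α) (f' := h1 s c α) (C := K * |δ| ^ 2)
        (fun x hx => (hasDerivAt_h hs hc (hmem x (hDE hx))).hasDerivWithinAt)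
        (fun x hx => step1 x hx)
        (convex_Icc _ _) h0D hδD
      rw [h_zero hs hc] at this
      simp only [sub_zero, Real.norm_eq_abs] at this
      calc |h s c α δ| ≤ K * |δ| ^ 2 * |δ| := this
        _ = K * |δ| ^ 3 := by ring
    have hfinal : h s c α δ
        = (s⁻¹ * _root_.arcosh (Real.cosh (c * s) * Real.cosh (δ * s)
            - Real.sinh (c * s) * Real.sinh (δ * s) * Real.cos α)) ^ 2
          - c ^ 2 + 2 * c * δ * Real.cos α
          - (Real.cos α ^ 2 + (c * s / Real.tanh (c * s)) * Real.sin α ^ 2) * δ ^ 2 := by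
      rw [h, A, F, B]
    rw [← hfinal]
    exact step0
end

section
/- The function θ ↦ θ / tan θ is concave on the open interval (0, π/2). -/
open Real

/-- The function `θ ↦ θ / tan θ` is concave on `(0, π/2)`. -/
theorem concaveOn_div_tan :
    ConcaveOn ℝ (Set.Ioo 0 (π / 2)) (fun θ : ℝ => θ / Real.tan θ) := by
  have hio : interior (Set.Ioo (0:ℝ) (π/2)) = Set.Ioo 0 (π/2) :=
    interior_Ioo
  have hkey : ∀ x ∈ Set.Ioo (0:ℝ) (π/2), 0 < Real.sin x ∧ 0 < Real.cos x := by
    rintro x ⟨hx0, hx2⟩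
    exact ⟨Real.sin_pos_of_pos_of_lt_pi hx0 (by linarith [Real.pi_gt_three]),
      Real.cos_pos_of_mem_Ioo ⟨by linarith, hx2⟩⟩
  have heq : Set.EqOn (fun θ : ℝ => θ / Real.tan θ)
      (fun θ : ℝ => θ * Real.cos θ / Real.sin θ) (Set.Ioo 0 (π/2)) := by
    intro x hx
    obtain ⟨hs, hc⟩ := hkey x hx
    simp only [Real.tan_eq_sin_div_cos]
    field_simp
  refine concaveOn_of_hasDerivWithinAt2_nonpos (f' := fun θ =>
      Real.cos θ / Real.sin θ - θ / Real.sin θ ^ 2)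
      (f'' := fun θ => 2 * (θ * Real.cos θ - Real.sin θ) / Real.sin θ ^ 3)
      (convex_Ioo _ _) ?_ ?_ ?_ ?_
  · -- continuity
    apply ContinuousOn.div continuousOn_id (Real.continuousOn_tan.mono ?_) ?_
    · intro x hx
      exact (hkey x hx).2.ne'
    · intro x hx
      rw [Real.tan_eq_sin_div_cos]
      exact div_ne_zero (hkey x hx).1.ne' (hkey x hx).2.ne'
  · rw [hio]
    intro x hx
    obtain ⟨hs, hc⟩ := hkey x hx
    have h1 : HasDerivAt (fun θ : ℝ => θ * Real.cos θ / Real.sin θ)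
        (((1 * Real.cos x + x * (-Real.sin x)) * Real.sin x -
          x * Real.cos x * Real.cos x) / Real.sin x ^ 2) x := by
      exact (((hasDerivAt_id x).mul (Real.hasDerivAt_cos x)).div
        (Real.hasDerivAt_sin x) hs.ne')
    have h2 : ((1 * Real.cos x + x * (-Real.sin x)) * Real.sin x -
          x * Real.cos x * Real.cos x) / Real.sin x ^ 2
        = Real.cos x / Real.sin x - x / Real.sin x ^ 2 := by
      have hpy := Real.sin_sq_add_cos_sq x
      field_simp
      linear_combination (-x) * hpy
    rw [h2] at h1
    exact ((h1.hasDerivWithinAt).congr (fun y hy => heq hy) (heq hx))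
  · rw [hio]
    intro x hx
    obtain ⟨hs, hc⟩ := hkey x hx
    have h1 : HasDerivAt (fun θ : ℝ => Real.cos θ / Real.sin θ - θ / Real.sin θ ^ 2)
        (((-Real.sin x) * Real.sin x - Real.cos x * Real.cos x) / Real.sin x ^ 2 -
          (1 * Real.sin x ^ 2 - x * (2 * Real.sin x ^ 1 * Real.cos x)) /
            (Real.sin x ^ 2) ^ 2) x := by
      refine HasDerivAt.sub ?_ ?_
      · exact (Real.hasDerivAt_cos x).div (Real.hasDerivAt_sin x) hs.ne'
      · exact (hasDerivAt_id x).div ((Real.hasDerivAt_sin x).pow 2)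
          (pow_ne_zero 2 hs.ne')
    have h2 : ((-Real.sin x) * Real.sin x - Real.cos x * Real.cos x) / Real.sin x ^ 2 -
          (1 * Real.sin x ^ 2 - x * (2 * Real.sin x ^ 1 * Real.cos x)) /
            (Real.sin x ^ 2) ^ 2
        = 2 * (x * Real.cos x - Real.sin x) / Real.sin x ^ 3 := by
      have hpy := Real.sin_sq_add_cos_sq x
      field_simp
      linear_combination (-Real.sin x) * hpy
    rw [h2] at h1
    exact h1.hasDerivWithinAt
  · rw [hio]
    intro x hx
    obtain ⟨hs, hc⟩ := hkey x hx
    have htan : x < Real.tan x := Real.lt_tan hx.1 hx.2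
    rw [Real.tan_eq_sin_div_cos, lt_div_iff₀ hc] at htan
    apply div_nonpos_of_nonpos_of_nonneg
    · nlinarith
    · positivity
end

section
/- The function θ ↦ θ / tanh θ is convex on the open interval (0, ∞). -/
open Real

private lemma sinh_le_mul_cosh {x : ℝ} (hx : 0 ≤ x) : Real.sinh x ≤ x * Real.cosh x := by
  have hmono : MonotoneOn (fun y : ℝ => y * Real.cosh y - Real.sinh y) (Set.Ici 0) := by
    apply monotoneOn_of_deriv_nonneg (convex_Ici 0)
    · fun_prop
    · intro y hy
      exact ((differentiableAt_id.mul Real.differentiable_cosh.differentiableAt).sub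
        Real.differentiable_sinh.differentiableAt).differentiableWithinAt
    · intro y hy
      rw [interior_Ici, Set.mem_Ioi] at hy
      have h : HasDerivAt (fun y : ℝ => y * Real.cosh y - Real.sinh y)
          (1 * Real.cosh y + y * Real.sinh y - Real.cosh y) y :=
        ((hasDerivAt_id y).mul (Real.hasDerivAt_cosh y)).sub (Real.hasDerivAt_sinh y)
      rw [h.deriv]
      have : 0 ≤ Real.sinh y := (Real.sinh_pos_iff.2 hy).le
      nlinarith
  have := hmono (Set.self_mem_Ici) (Set.mem_Ici.2 hx) hx
  simp at this
  linarith

private noncomputable def G (x : ℝ) : ℝ := (Real.sinh x * Real.cosh x - x) / Real.sinh x ^ 2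

private lemma hasDerivAt_g {x : ℝ} (hx : 0 < x) :
    HasDerivAt (fun θ : ℝ => θ * Real.cosh θ / Real.sinh θ) (G x) x := by
  have hs : Real.sinh x ≠ 0 := (Real.sinh_pos_iff.2 hx).ne'
  have h : HasDerivAt (fun θ : ℝ => θ * Real.cosh θ / Real.sinh θ)
      (((1 * Real.cosh x + x * Real.sinh x) * Real.sinh x - x * Real.cosh x * Real.cosh x)
        / Real.sinh x ^ 2) x :=
    (((hasDerivAt_id x).mul (Real.hasDerivAt_cosh x)).div (Real.hasDerivAt_sinh x) hs)
  convert h using 1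
  unfold G
  have := Real.cosh_sq_sub_sinh_sq x
  congr 1
  nlinarith

private lemma hasDerivAt_G {x : ℝ} (hx : 0 < x) :
    HasDerivAt G (2 * (x * Real.cosh x - Real.sinh x) / Real.sinh x ^ 3) x := by
  have hs : 0 < Real.sinh x := Real.sinh_pos_iff.2 hx
  have hs2 : Real.sinh x ^ 2 ≠ 0 := by positivity
  have h : HasDerivAt G
      (((Real.cosh x * Real.cosh x + Real.sinh x * Real.sinh x - 1) * Real.sinh x ^ 2
        - (Real.sinh x * Real.cosh x - x) * (2 * Real.sinh x ^ 1 * Real.cosh x))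
        / (Real.sinh x ^ 2) ^ 2) x := by
    apply HasDerivAt.div
    · exact ((Real.hasDerivAt_sinh x).mul (Real.hasDerivAt_cosh x)).sub (hasDerivAt_id x)
    · exact (Real.hasDerivAt_sinh x).pow 2
    · exact hs2
  convert h using 1
  have hp := Real.cosh_sq_sub_sinh_sq x
  field_simp
  linear_combination (Real.sinh x) * hp

/-- The function `θ ↦ θ / tanh θ` is convex on `(0, ∞)`. -/
theorem convexOn_div_tanh :
    ConvexOn ℝ (Set.Ioi 0) (fun θ : ℝ => θ / Real.tanh θ) := by
  set g : ℝ → ℝ := fun θ => θ * Real.cosh θ / Real.sinh θ with hg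
  have heq : ∀ x ∈ Set.Ioi (0:ℝ), x / Real.tanh x = g x := by
    intro x hx
    rw [Real.tanh_eq_sinh_div_cosh, hg]
    rw [div_div_eq_mul_div]
  have hcg : ConvexOn ℝ (Set.Ioi 0) g := by
    have hop : IsOpen (Set.Ioi (0:ℝ)) := isOpen_Ioi
    have hderiv : ∀ x ∈ Set.Ioi (0:ℝ), deriv g x = G x := fun x hx =>
      (hasDerivAt_g hx).deriv
    apply convexOn_of_deriv2_nonneg (convex_Ioi 0)
    · intro x hx
      exact (hasDerivAt_g (Set.mem_Ioi.1 hx)).continuousAt.continuousWithinAt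
    · intro x hx
      rw [hop.interior_eq] at hx
      exact (hasDerivAt_g (Set.mem_Ioi.1 hx)).differentiableAt.differentiableWithinAt
    · intro x hx
      rw [hop.interior_eq] at hx
      have hev : deriv g =ᶠ[nhds x] G :=
        Filter.eventuallyEq_of_mem (hop.mem_nhds hx) hderiv
      exact (((hasDerivAt_G (Set.mem_Ioi.1 hx)).differentiableAt).congr_of_eventuallyEq
        hev).differentiableWithinAt
    · intro x hx
      rw [hop.interior_eq] at hx
      have hx' : (0:ℝ) < x := Set.mem_Ioi.1 hx
      have hev : deriv g =ᶠ[nhds x] G :=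
        Filter.eventuallyEq_of_mem (hop.mem_nhds hx) hderiv
      have : deriv (deriv g) x = deriv G x := hev.deriv_eq
      simp only [Function.iterate_succ, Function.iterate_zero, Function.comp_apply, id]
      rw [this, (hasDerivAt_G hx').deriv]
      have h1 : Real.sinh x ≤ x * Real.cosh x := sinh_le_mul_cosh hx'.le
      have h2 : 0 < Real.sinh x := Real.sinh_pos_iff.2 hx'
      have h3 : 0 ≤ x * Real.cosh x - Real.sinh x := by linarith
      positivity
  exact ⟨hcg.1, fun x hx y hy a b ha hb hab => by
    dsimp only
    rw [heq x hx, heq y hy, heq _ (hcg.1 hx hy ha hb hab)]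
    exact hcg.2 hx hy ha hb hab⟩
end

section
/- Let r, R, b, φ be real numbers with r ≥ 0, R > 0, r + R ≤ π/2, 0 ≤ φ < π/2, R / cos φ ≤ π/2, and R ≤ b ≤ R / cos φ. If cos r = cos(r + R)·cos b + sin(r + R)·sin b·cos φ, then φ = 0. -/
open Real

/-- Spherical rigidity: if `r ≥ 0`, `R > 0`, `r + R ≤ π/2`, `0 ≤ φ < π/2`,
`R / cos φ ≤ π/2` and `R ≤ b ≤ R / cos φ`, then the spherical law of cosines
`cos r = cos(r+R)·cos b + sin(r+R)·sin b·cos φ` forces `φ = 0`. -/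
theorem spherical_triangle_rigidity (r R b φ : ℝ)
    (hr : 0 ≤ r) (hR : 0 < R) (hrR : r + R ≤ π / 2)
    (hφ0 : 0 ≤ φ) (hφ1 : φ < π / 2)
    (hRcos : R / Real.cos φ ≤ π / 2)
    (hbl : R ≤ b) (hbu : b ≤ R / Real.cos φ)
    (hcos : Real.cos r =
      Real.cos (r + R) * Real.cos b + Real.sin (r + R) * Real.sin b * Real.cos φ) :
    φ = 0 := by
  by_contra hφ
  have hφpos : 0 < φ := lt_of_le_of_ne hφ0 (Ne.symm hφ)
  have hπ : (0:ℝ) < π := Real.pi_pos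
  have hcφ : 0 < Real.cos φ := Real.cos_pos_of_mem_Ioo ⟨by linarith, hφ1⟩
  have hcφ1 : Real.cos φ < 1 := by
    have h := Real.cos_lt_cos_of_nonneg_of_le_pi le_rfl (by linarith) hφpos
    simpa using h
  have hb0 : 0 < b := lt_of_lt_of_le hR hbl
  have hbR : b * Real.cos φ ≤ R := by
    rw [← le_div_iff₀ hcφ]; exact hbu
  have hbπ : b ≤ π / 2 := le_trans hbu hRcos
  set G : ℝ → ℝ := fun t => Real.cos (r + R - t * Real.cos φ) -
      (Real.cos (r + R) * Real.cos t + Real.sin (r + R) * Real.sin t * Real.cos φ) with hGdef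
  have hderiv : ∀ t : ℝ, HasDerivAt G
      (Real.cos φ * Real.sin (r + R - t * Real.cos φ) + Real.cos (r + R) * Real.sin t
        - Real.sin (r + R) * Real.cos t * Real.cos φ) t := by
    intro t
    have h1 : HasDerivAt (fun t : ℝ => r + R - t * Real.cos φ) (-Real.cos φ) t := by
      simpa using ((hasDerivAt_id t).mul_const (Real.cos φ)).const_sub (r + R)
    have h2 : HasDerivAt (fun t : ℝ => Real.cos (r + R - t * Real.cos φ))
        (-Real.sin (r + R - t * Real.cos φ) * (-Real.cos φ)) t :=
      (Real.hasDerivAt_cos _).comp t h1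
    have h3 : HasDerivAt (fun t : ℝ => Real.cos (r + R) * Real.cos t)
        (Real.cos (r + R) * (-Real.sin t)) t :=
      (Real.hasDerivAt_cos t).const_mul _
    have h4 : HasDerivAt (fun t : ℝ => Real.sin (r + R) * Real.sin t * Real.cos φ)
        (Real.sin (r + R) * Real.cos t * Real.cos φ) t := by
      simpa [mul_comm, mul_assoc] using
        (((Real.hasDerivAt_sin t).const_mul (Real.sin (r + R))).mul_const (Real.cos φ))
    have := (h2.sub (h3.add h4))
    exact this.congr_deriv (by ring)
  have hdpos : ∀ t ∈ Set.Ioo (0:ℝ) b,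
      0 < Real.cos φ * Real.sin (r + R - t * Real.cos φ) + Real.cos (r + R) * Real.sin t
        - Real.sin (r + R) * Real.cos t * Real.cos φ := by
    intro t ht
    obtain ⟨ht0, htb⟩ := ht
    have htcos : t * Real.cos φ < t := by nlinarith
    have hsin_lt : Real.sin (r + R - t) < Real.sin (r + R - t * Real.cos φ) := by
      apply Real.strictMonoOn_sin
      · constructor <;> [linarith; nlinarith]
      · constructor <;> [nlinarith; nlinarith]
      · linarith
    have hcosrR : 0 ≤ Real.cos (r + R) := Real.cos_nonneg_of_mem_Icc ⟨by linarith, hrR⟩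
    have hsint : 0 ≤ Real.sin t := Real.sin_nonneg_of_nonneg_of_le_pi (le_of_lt ht0)
      (by linarith)
    have key : Real.cos φ * Real.sin (r + R - t * Real.cos φ) + Real.cos (r + R) * Real.sin t
        - Real.sin (r + R) * Real.cos t * Real.cos φ
        = Real.cos φ * (Real.sin (r + R - t * Real.cos φ) - Real.sin (r + R - t))
          + Real.cos (r + R) * Real.sin t * (1 - Real.cos φ) := by
      rw [Real.sin_sub (r + R) t]; ring
    rw [key]
    have t1 : 0 < Real.cos φ * (Real.sin (r + R - t * Real.cos φ) - Real.sin (r + R - t)) :=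
      mul_pos hcφ (by linarith)
    have t2 : 0 ≤ Real.cos (r + R) * Real.sin t * (1 - Real.cos φ) := by
      apply mul_nonneg (mul_nonneg hcosrR hsint); linarith
    linarith
  have hmono : StrictMonoOn G (Set.Icc 0 b) := by
    apply strictMonoOn_of_deriv_pos (convex_Icc 0 b)
    · exact Continuous.continuousOn (by fun_prop)
    · intro t ht
      rw [interior_Icc] at ht
      rw [(hderiv t).deriv]
      exact hdpos t ht
  have hG0 : G 0 = 0 := by simp [hGdef]
  have hGb : 0 < G b := by
    rw [← hG0]
    exact hmono ⟨le_refl 0, le_of_lt hb0⟩ ⟨le_of_lt hb0, le_refl b⟩ hb0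
  have hbc0 : 0 < b * Real.cos φ := mul_pos hb0 hcφ
  have hle : Real.cos (r + R - b * Real.cos φ) ≤ Real.cos r := by
    apply Real.cos_le_cos_of_nonneg_of_le_pi hr (by linarith)
    linarith
  simp only [hGdef] at hGb
  linarith
end

section
/- Let E be an n-dimensional real inner product space (n ≥ 1) and let p_0, …, p_n be an affine basis of E, with barycentric coordinate functions λ_0, …, λ_n. Fix an index i and let a_i = dist(p_i, A_i), where A_i is the affine span of the points {p_j : j ≠ i}. Then a_i > 0, and for all u, v ∈ E, |λ_i(u) − λ_i(v)| ≤ ‖u − v‖ / a_i; in other words, λ_i is Lipschitz with constant 1/a_i. -/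
open Real Metric

/-- In an `n`-dimensional real inner product space (`n ≥ 1`), with an affine basis
`p_0, …, p_n` and barycentric coordinate functions `λ_0, …, λ_n`, the altitude
`a_i = dist(p_i, affine span of the other points)` is positive, and `λ_i` is
Lipschitz with constant `1 / a_i`:  `|λ_i(u) − λ_i(v)| ≤ ‖u − v‖ / a_i`. -/
theorem barycentric_coord_lipschitz (n : ℕ) (hn : 1 ≤ n)
    (E : Type*) [NormedAddCommGroup E] [InnerProductSpace ℝ E] [FiniteDimensional ℝ E]
    (hdim : Module.finrank ℝ E = n)
    (b : AffineBasis (Fin (n + 1)) ℝ E) (i : Fin (n + 1)) :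
    0 < Metric.infDist (b i)
        ((affineSpan ℝ ((fun j => b j) '' {j | j ≠ i}) : AffineSubspace ℝ E) : Set E) ∧
    ∀ u v : E, |b.coord i u - b.coord i v| ≤
      ‖u - v‖ / Metric.infDist (b i)
        ((affineSpan ℝ ((fun j => b j) '' {j | j ≠ i}) : AffineSubspace ℝ E) : Set E) := by
  classical
  set A : AffineSubspace ℝ E := affineSpan ℝ ((fun j => b j) '' {j | j ≠ i}) with hA
  obtain ⟨j, hj⟩ : ∃ j : Fin (n + 1), j ≠ i := by
    have : Nontrivial (Fin (n + 1)) := Fin.nontrivial_iff_two_le.mpr (by omega)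
    exact exists_ne i
  have hbjA : b j ∈ A := subset_affineSpan ℝ _ ⟨j, hj, rfl⟩
  have hAne : (A : Set E).Nonempty := ⟨b j, hbjA⟩
  -- coord i vanishes on A
  have hzeroA : ∀ x ∈ A, b.coord i x = 0 := by
    intro x hx
    refine affineSpan_induction (p := fun x => b.coord i x = 0) hx ?_ ?_
    · rintro y ⟨k, hk, rfl⟩
      exact b.coord_apply_ne (Ne.symm hk)
    · intro c u v w hu hv hw
      rw [(b.coord i).map_vadd, map_smul, AffineMap.linearMap_vsub]
      simp only [vsub_eq_sub, vadd_eq_add, smul_eq_mul, hu, hv, hw]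
      ring
  -- any point where coord i vanishes is in A
  have hmemA : ∀ x : E, b.coord i x = 0 → x ∈ A := by
    intro x hx
    have hcomb := b.affineCombination_coord_eq_self x
    have hsum : ∑ k ∈ Finset.univ.filter (fun k => k ≠ i), b.coord k x = 1 := by
      rw [Finset.filter_ne' Finset.univ i, Finset.sum_erase_eq_sub (Finset.mem_univ i),
        b.sum_coord_apply_eq_one, hx, sub_zero]
    have hsum' : ∑ k ∈ Finset.univ.subtype (fun k => k ≠ i), b.coord k.1 x = 1 :=
      (Finset.sum_subtype_eq_sum_filter (s := Finset.univ)
        (fun k => b.coord k x) (p := fun k => k ≠ i)).trans hsum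
    have hmem := affineCombination_mem_affineSpan (k := ℝ) hsum'
      (fun k : {k : Fin (n + 1) // k ≠ i} => b k.1)
    have heq : (Finset.univ.subtype (fun k => k ≠ i)).affineCombination ℝ
        (fun k : {k : Fin (n + 1) // k ≠ i} => b k.1) (fun k => b.coord k.1 x) = x := by
      rw [Finset.affineCombination_subtype_eq_filter Finset.univ
          (fun k => b.coord k x) (fun k => b k) (fun k => k ≠ i),
        Finset.affineCombination_indicator_subset _ _
          (Finset.filter_subset (fun k => k ≠ i) Finset.univ)]
      have : Set.indicator (↑(Finset.univ.filter (fun k => k ≠ i)))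
          (fun k => b.coord k x) = fun k => b.coord k x := by
        funext k
        by_cases hk : k = i
        · subst hk
          simp [Set.indicator_apply, hx]
        · simp [Set.indicator_apply, hk]
      rw [this]
      exact hcomb
    rw [heq] at hmem
    have hrange : Set.range (fun k : {k : Fin (n + 1) // k ≠ i} => b k.1) =
        (fun j => b j) '' {j | j ≠ i} := by
      ext y
      constructor
      · rintro ⟨⟨k, hk⟩, rfl⟩; exact ⟨k, hk, rfl⟩
      · rintro ⟨k, hk, rfl⟩; exact ⟨⟨k, hk⟩, rfl⟩
    rwa [hrange] at hmem
  -- altitude is positive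
  have hA_closed : IsClosed (A : Set E) := by
    rw [← AffineSubspace.isClosed_direction_iff]
    exact A.direction.closed_of_finiteDimensional
  have hbi_notmem : b i ∉ (A : Set E) := by
    intro h
    have := hzeroA _ h
    rw [b.coord_apply_eq] at this
    exact one_ne_zero this
  have hpos : 0 < Metric.infDist (b i) (A : Set E) :=
    (hA_closed.notMem_iff_infDist_pos hAne).mp hbi_notmem
  refine ⟨hpos, fun u v => ?_⟩
  set a := Metric.infDist (b i) (A : Set E) with ha
  set g := (b.coord i).linear with hg
  have hguv : b.coord i u - b.coord i v = g (u - v) := by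
    have h := AffineMap.linearMap_vsub (b.coord i) u v
    simp only [vsub_eq_sub] at h
    rw [hg, h]
  rw [hguv]
  set w := u - v with hw
  by_cases hgw : g w = 0
  · rw [hgw, abs_zero]
    exact div_nonneg (norm_nonneg _) hpos.le
  · -- the point q := b i - (g w)⁻¹ • w is in A
    set q := (-(g w)⁻¹ • w) +ᵥ b i with hq
    have hql : b.coord i q = 0 := by
      have : b.coord i q = g (-(g w)⁻¹ • w) +ᵥ b.coord i (b i) :=
        (b.coord i).map_vadd _ _
      rw [this, map_smul, b.coord_apply_eq]
      simp only [vadd_eq_add, smul_eq_mul]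
      field_simp
      norm_num
    have hqA : q ∈ A := hmemA q hql
    have hdist : a ≤ dist (b i) q := Metric.infDist_le_dist_of_mem hqA
    have hdq : dist (b i) q = |g w|⁻¹ * ‖w‖ := by
      rw [dist_eq_norm, hq]
      simp only [vadd_eq_add]
      rw [show b i - (-(g w)⁻¹ • w + b i) = (g w)⁻¹ • w by module, norm_smul]
      simp [abs_inv]
    rw [le_div_iff₀ hpos]
    have habs : 0 < |g w| := abs_pos.mpr hgw
    calc |g w| * a ≤ |g w| * (|g w|⁻¹ * ‖w‖) := by
          rw [hdq] at hdist
          exact mul_le_mul_of_nonneg_left hdist habs.le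
      _ = ‖w‖ := by field_simp
end
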